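/- arXiv:2310.12091 — 2 statements merged into one kernel-verified Lean document; each statement's English description precedes it below -/
import Mathlib

section
/- Let t ∈ ℕ and let f be a polynomial in 4 real variables with complex coefficients of total degree ≤ 2t+1. Then there exists a polynomial g in 3 real variables with complex coefficients of total degree ≤ t such that for every (a,b) ∈ S³, (1/σ(S¹)) ∫_{S¹} f(az, bz) dσ(z) = g(π(a,b)). -/
/-!
In the coordinates `a, ā, b, b̄` the monomial `a^i ā^j b^k b̄^l` is multiplied by
`z^(i+k) z̄^(j+l)` under `(a, b) ↦ (a z, b z)`, and the mean of that factor over the unit circle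
vanishes unless `i + k = j + l` (rotating the circle by a suitable angle turns it into its
negative). A surviving monomial is a product of `i + k` factors `|a|²`, `|b|²`, `a b̄`, `ā b`,
which on `S³` are `(1 + ξ)/2`, `(1 - ξ)/2`, `η/2`, `η̄/2`; its degree `2 (i + k)` is at most
`2t + 1`, so at most `t` factors occur.
-/

open MeasureTheory Metric MvPolynomial

noncomputable section

/-- The unit circle in `ℂ`, with its 1-dimensional Hausdorff (arc-length) measure `μH[1]`. -/
def circ : Set ℂ := sphere 0 1

/-- Evaluate a polynomial in 4 real variables with complex coefficients at a point of `ℂ²`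
via the real coordinates `(Re a, Im a, Re b, Im b)`. -/
def evalC4 (p : ℂ × ℂ) (f : MvPolynomial (Fin 4) ℂ) : ℂ :=
  MvPolynomial.eval (fun i => (![p.1.re, p.1.im, p.2.re, p.2.im] i : ℂ)) f

/-- The complex Hopf map on `ℂ²`. -/
def hopfC (p : ℂ × ℂ) : ℝ × ℂ :=
  (Complex.normSq p.1 - Complex.normSq p.2, 2 * p.1 * star p.2)

/-- Evaluate a polynomial in 3 real variables with complex coefficients at a point of `ℝ × ℂ`
via the real coordinates `(ξ, Re η, Im η)`. -/
def evalC3 (p : ℝ × ℂ) (g : MvPolynomial (Fin 3) ℂ) : ℂ :=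
  MvPolynomial.eval (fun i => (![p.1, p.2.re, p.2.im] i : ℂ)) g

open Complex ComplexConjugate Set

lemma measurableSet_circ : MeasurableSet circ :=
  isClosed_sphere.measurableSet

def circMean (F : ℂ → ℂ) : ℂ :=
  (μH[1] circ).toReal⁻¹ • ∫ z in circ, F z ∂μH[1]

lemma hausdorffMeasure_circ_ne_top : μH[1] circ ≠ ⊤ := by
  have hcirc : circ = circleMap 0 1 '' Icc 0 (0 + 2 * Real.pi) := by
    rw [(periodic_circleMap 0 1).image_Icc Real.two_pi_pos 0, range_circleMap]
    simp [circ]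
  refine ne_top_of_le_ne_top ?_
    (hcirc ▸ (lipschitzWith_circleMap 0 1).hausdorffMeasure_image_le zero_le_one _)
  simp [hausdorffMeasure_real, Real.volume_Icc, ENNReal.mul_eq_top]

lemma hausdorffMeasure_circ_ne_zero : μH[1] circ ≠ 0 := by
  intro h0
  have hre : Icc (-1 : ℝ) 1 ⊆ re '' circ := fun x hx => by
    have hx2 : x ^ 2 ≤ 1 := by nlinarith [hx.1, hx.2]
    refine ⟨⟨x, √(1 - x ^ 2)⟩, ?_, rfl⟩
    rw [circ, mem_sphere_zero_iff_norm, norm_def, normSq_mk, ← pow_two, ← pow_two,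
      Real.sq_sqrt (by linarith), add_sub_cancel, Real.sqrt_one]
  have hle : μH[1] (Icc (-1 : ℝ) 1) ≤ 0 :=
    calc μH[1] (Icc (-1 : ℝ) 1) ≤ μH[1] (re '' circ) := measure_mono hre
      _ ≤ 1 ^ (1 : ℝ) * μH[1] circ :=
        (RCLike.lipschitzWith_re (K := ℂ)).hausdorffMeasure_image_le zero_le_one _
      _ = 0 := by simp [h0]
  norm_num [hausdorffMeasure_real, Real.volume_Icc] at hle

lemma setIntegral_circ_comp_mul_left (w : Circle) (F : ℂ → ℂ) :
    ∫ z in circ, F (w * z) ∂μH[1] = ∫ z in circ, F z ∂μH[1] := by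
  let e := (rotation w).toIsometryEquiv
  have hpre : e ⁻¹' circ = circ := by
    ext z
    simp only [mem_preimage, circ, mem_sphere_zero_iff_norm]
    simp [e, mem_sphere_zero_iff_norm.1 w.2]
  have h := (e.measurePreserving_hausdorffMeasure 1).setIntegral_preimage_emb
    e.toHomeomorph.measurableEmbedding F circ
  rwa [hpre] at h

lemma setIntegral_circ_pow_mul_conj_pow_of_ne {m n : ℕ} (hmn : m ≠ n) :
    ∫ z in circ, z ^ m * conj z ^ n ∂μH[1] = 0 := by
  set k : ℝ := m - n
  have hk : (m : ℂ) - n ≠ 0 := by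
    simpa [sub_eq_zero] using hmn
  let w := Circle.exp (Real.pi / k)
  -- rotating by `w` multiplies the integrand by `w ^ (m - n) = -1`
  have hw : (w : ℂ) ^ m * conj (w : ℂ) ^ n = -1 := by
    rw [Circle.coe_exp, ← exp_conj, ← exp_nat_mul, ← exp_nat_mul, ← exp_add, ← exp_pi_mul_I]
    congr 1
    simp only [map_mul, conj_ofReal, conj_I]
    push_cast [k]
    field_simp
    ring
  have hrot := setIntegral_circ_comp_mul_left w (fun z => z ^ m * conj z ^ n)
  simp only [map_mul, mul_pow] at hrot
  rw [show (fun z : ℂ => (w : ℂ) ^ m * z ^ m * (conj (w : ℂ) ^ n * conj z ^ n)) =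
      fun z => ((w : ℂ) ^ m * conj (w : ℂ) ^ n) * (z ^ m * conj z ^ n) by ext; ring,
    integral_const_mul, hw, neg_one_mul] at hrot
  exact CharZero.neg_eq_self_iff.mp hrot

lemma circMean_pow_mul_conj_pow (m n : ℕ) :
    circMean (fun z => z ^ m * conj z ^ n) = if m = n then 1 else 0 := by
  split_ifs with hmn
  · subst hmn
    have hone : EqOn (fun z : ℂ => z ^ m * conj z ^ m) 1 circ := fun z hz => by
      show z ^ m * conj z ^ m = 1
      rw [← mul_pow, mul_conj, normSq_eq_norm_sq, mem_sphere_zero_iff_norm.mp hz]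
      simp
    rw [circMean, setIntegral_congr_fun measurableSet_circ hone]
    simp [measureReal_def, ENNReal.toReal_eq_zero_iff, hausdorffMeasure_circ_ne_zero,
      hausdorffMeasure_circ_ne_top]
  · rw [circMean, setIntegral_circ_pow_mul_conj_pow_of_ne hmn, smul_zero]

lemma integrableOn_circ_pow_mul_conj_pow (m n : ℕ) :
    IntegrableOn (fun z : ℂ => z ^ m * conj z ^ n) circ μH[1] := by
  refine Measure.integrableOn_of_bounded (M := 1) hausdorffMeasure_circ_ne_top
    (by fun_prop : Continuous fun z : ℂ => z ^ m * conj z ^ n).aestronglyMeasurable ?_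
  rw [ae_restrict_iff' measurableSet_circ]
  refine Filter.Eventually.of_forall fun z hz => ?_
  simp [mem_sphere_zero_iff_norm.mp hz]

lemma circMean_sum_mul_pow_mul_conj_pow {ι : Type*} (s : Finset ι) (c : ι → ℂ) (m n : ι → ℕ) :
    circMean (fun z => ∑ i ∈ s, c i * (z ^ m i * conj z ^ n i)) =
      ∑ i ∈ s, if m i = n i then c i else 0 := by
  rw [circMean, integral_finsetSum _
    fun i _ => (integrableOn_circ_pow_mul_conj_pow (m i) (n i)).const_mul (c i), Finset.smul_sum]
  refine Finset.sum_congr rfl fun i _ => ?_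
  have hmean := circMean_pow_mul_conj_pow (m i) (n i)
  rw [circMean] at hmean
  rw [integral_const_mul, ← mul_smul_comm, hmean, mul_ite, mul_one, mul_zero]

namespace MvPolynomial

variable {σ τ R : Type*} [CommSemiring R]

lemma eval_aeval (x : τ → R) (h : σ → MvPolynomial τ R) (f : MvPolynomial σ R) :
    eval x (aeval h f) = eval (fun i => eval x (h i)) f := by
  rw [aeval_eq_bind₁]
  exact eval₂Hom_bind₁ _ _ _ _

lemma totalDegree_pow_le_of_totalDegree_le_one {p : MvPolynomial σ R} (hp : p.totalDegree ≤ 1)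
    (n : ℕ) : (p ^ n).totalDegree ≤ n :=
  (totalDegree_pow p n).trans (by nlinarith)

lemma totalDegree_aeval_le {h : σ → MvPolynomial τ R} (hh : ∀ i, (h i).totalDegree ≤ 1)
    (f : MvPolynomial σ R) : (aeval h f).totalDegree ≤ f.totalDegree := by
  conv_lhs => rw [f.as_sum, map_sum]
  refine totalDegree_finsetSum_le fun d hd => (le_totalDegree hd).trans' ?_
  rw [aeval_monomial, algebraMap_eq, Finsupp.prod, Finsupp.sum]
  refine (totalDegree_mul _ _).trans ?_
  rw [totalDegree_C, zero_add]
  exact (totalDegree_finsetProd _ _).trans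
    (Finset.sum_le_sum fun i _ => totalDegree_pow_le_of_totalDegree_le_one (hh i) (d i))

end MvPolynomial

-- In `aeval reImViaConj f` the variables stand for `(a, ā, b, b̄)`.
def reImViaConj : Fin 4 → MvPolynomial (Fin 4) ℂ :=
  ![C (2 : ℂ)⁻¹ * (X 0 + X 1), C (2 * I)⁻¹ * (X 0 - X 1),
    C (2 : ℂ)⁻¹ * (X 2 + X 3), C (2 * I)⁻¹ * (X 2 - X 3)]

lemma isHomogeneous_reImViaConj (i : Fin 4) : (reImViaConj i).IsHomogeneous 1 := by
  fin_cases i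
  · exact ((isHomogeneous_X _ _).add (isHomogeneous_X _ _)).C_mul _
  · exact ((isHomogeneous_X _ _).sub (isHomogeneous_X _ _)).C_mul _
  · exact ((isHomogeneous_X _ _).add (isHomogeneous_X _ _)).C_mul _
  · exact ((isHomogeneous_X _ _).sub (isHomogeneous_X _ _)).C_mul _

lemma evalC4_eq_eval_aeval_reImViaConj (p : ℂ × ℂ) (f : MvPolynomial (Fin 4) ℂ) :
    evalC4 p f = eval ![p.1, conj p.1, p.2, conj p.2] (aeval reImViaConj f) := by
  rw [evalC4, eval_aeval]
  refine congrArg (fun x => eval x f) (funext fun i => ?_)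
  fin_cases i <;> simp [reImViaConj, re_eq_add_conj, im_eq_sub_conj] <;> field_simp <;> simp [I_sq]

-- In `aeval conjViaReIm g` the variables stand for `(ξ, Re η, Im η)`.
def conjViaReIm : Fin 3 → MvPolynomial (Fin 3) ℂ :=
  ![X 0, X 1 + C I * X 2, X 1 - C I * X 2]

lemma isHomogeneous_conjViaReIm (i : Fin 3) : (conjViaReIm i).IsHomogeneous 1 := by
  fin_cases i
  · exact isHomogeneous_X _ _
  · exact (isHomogeneous_X _ _).add (isHomogeneous_C_mul_X _ _)
  · exact (isHomogeneous_X _ _).sub (isHomogeneous_C_mul_X _ _)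

lemma evalC3_aeval_conjViaReIm (p : ℝ × ℂ) (g : MvPolynomial (Fin 3) ℂ) :
    evalC3 p (aeval conjViaReIm g) = eval ![(p.1 : ℂ), p.2, conj p.2] g := by
  rw [evalC3, eval_aeval]
  refine congrArg (fun x => eval x g) (funext fun i => ?_)
  fin_cases i <;> apply Complex.ext <;> simp [conjViaReIm]

def conjMonomial (d : Fin 4 →₀ ℕ) (a b : ℂ) : ℂ :=
  a ^ d 0 * conj a ^ d 1 * b ^ d 2 * conj b ^ d 3

lemma eval_conj_eq_sum_conjMonomial (q : MvPolynomial (Fin 4) ℂ) (a b : ℂ) :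
    eval ![a, conj a, b, conj b] q = ∑ d ∈ q.support, coeff d q * conjMonomial d a b := by
  rw [eval_eq']
  refine Finset.sum_congr rfl fun d _ => ?_
  simp [Fin.prod_univ_four, conjMonomial]

lemma conjMonomial_mul_right (d : Fin 4 →₀ ℕ) (a b z : ℂ) :
    conjMonomial d (a * z) (b * z) =
      conjMonomial d a b * (z ^ (d 0 + d 2) * conj z ^ (d 1 + d 3)) := by
  simp only [conjMonomial, map_mul, mul_pow, pow_add]
  ring

lemma circMean_eval_conj_mul (q : MvPolynomial (Fin 4) ℂ) (a b : ℂ) :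
    circMean (fun z => eval ![a * z, conj (a * z), b * z, conj (b * z)] q) =
      ∑ d ∈ q.support with d 0 + d 2 = d 1 + d 3, coeff d q * conjMonomial d a b := by
  simp only [eval_conj_eq_sum_conjMonomial, conjMonomial_mul_right, ← mul_assoc (coeff _ q)]
  rw [circMean_sum_mul_pow_mul_conj_pow, Finset.sum_filter]

lemma conjMonomial_eq_of_balanced {d : Fin 4 →₀ ℕ} (hd : d 0 + d 2 = d 1 + d 3) (a b : ℂ) :
    conjMonomial d a b = (a * conj a) ^ min (d 0) (d 1) * (b * conj b) ^ min (d 2) (d 3) *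
      (a * conj b) ^ (d 0 - d 1) * (conj a * b) ^ (d 1 - d 0) := by
  rcases le_total (d 1) (d 0) with h | h <;> obtain ⟨k, hk⟩ := Nat.exists_eq_add_of_le h
  on_goal 1 => rw [conjMonomial, hk, show d 3 = d 2 + k by omega]
  on_goal 2 => rw [conjMonomial, hk, show d 2 = d 3 + k by omega]
  all_goals
    simp only [Nat.add_sub_cancel_left, min_eq_right (Nat.le_add_right _ _),
      min_eq_left (Nat.le_add_right _ _), Nat.sub_eq_zero_of_le (Nat.le_add_right _ _), pow_add,
      mul_pow]
    ring

-- In the variables `(ξ, η, η̄)`, with `ξ = |a|² - |b|²` and `η = 2 a b̄`, the four factors are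
-- `|a|²`, `|b|²`, `a b̄` and `ā b` on `S³`.
def hopfMonomial (d : Fin 4 →₀ ℕ) : MvPolynomial (Fin 3) ℂ :=
  (C (2 : ℂ)⁻¹ * (1 + X 0)) ^ min (d 0) (d 1) * (C (2 : ℂ)⁻¹ * (1 - X 0)) ^ min (d 2) (d 3) *
    (C (2 : ℂ)⁻¹ * X 1) ^ (d 0 - d 1) * (C (2 : ℂ)⁻¹ * X 2) ^ (d 1 - d 0)

lemma totalDegree_hopfMonomial_le {d : Fin 4 →₀ ℕ} (hd : d 0 + d 2 = d 1 + d 3) :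
    (hopfMonomial d).totalDegree ≤ d 0 + d 2 := by
  have hC : ∀ p : MvPolynomial (Fin 3) ℂ, p.totalDegree ≤ 1 → (C (2 : ℂ)⁻¹ * p).totalDegree ≤ 1 :=
    fun p hp => (totalDegree_mul _ _).trans (by simpa using hp)
  have hX : ∀ i, (X i : MvPolynomial (Fin 3) ℂ).totalDegree ≤ 1 := fun i => by simp [totalDegree_X]
  have hadd : (1 + X 0 : MvPolynomial (Fin 3) ℂ).totalDegree ≤ 1 :=
    (totalDegree_add _ _).trans (by simp [totalDegree_X])
  have hsub : (1 - X 0 : MvPolynomial (Fin 3) ℂ).totalDegree ≤ 1 :=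
    (totalDegree_sub _ _).trans (by simp [totalDegree_X])
  have h₁ := totalDegree_pow_le_of_totalDegree_le_one (hC _ hadd) (min (d 0) (d 1))
  have h₂ := totalDegree_pow_le_of_totalDegree_le_one (hC _ hsub) (min (d 2) (d 3))
  have h₃ := totalDegree_pow_le_of_totalDegree_le_one (hC _ (hX 1)) (d 0 - d 1)
  have h₄ := totalDegree_pow_le_of_totalDegree_le_one (hC _ (hX 2)) (d 1 - d 0)
  calc (hopfMonomial d).totalDegree
      ≤ min (d 0) (d 1) + min (d 2) (d 3) + (d 0 - d 1) + (d 1 - d 0) :=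
        (totalDegree_mul _ _).trans <| add_le_add ((totalDegree_mul _ _).trans <|
          add_le_add ((totalDegree_mul _ _).trans (add_le_add h₁ h₂)) h₃) h₄
    _ = d 0 + d 2 := by omega

lemma eval_hopfMonomial {a b : ℂ} (hab : normSq a + normSq b = 1) {d : Fin 4 →₀ ℕ}
    (hd : d 0 + d 2 = d 1 + d 3) :
    eval ![((hopfC (a, b)).1 : ℂ), (hopfC (a, b)).2, conj (hopfC (a, b)).2] (hopfMonomial d) =
      conjMonomial d a b := by
  have hab' : (normSq a : ℂ) + normSq b = 1 := by
    exact_mod_cast hab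
  have hη : (2 : ℂ)⁻¹ * (2 * a * conj b) = a * conj b := by ring
  have hη' : (2 : ℂ)⁻¹ * (2 * conj a * b) = conj a * b := by ring
  have ha : (2 : ℂ)⁻¹ * (1 + (normSq a - normSq b : ℝ)) = a * conj a := by
    rw [mul_conj]
    push_cast
    linear_combination (-(2 : ℂ)⁻¹) * hab'
  have hb : (2 : ℂ)⁻¹ * (1 - (normSq a - normSq b : ℝ)) = b * conj b := by
    rw [mul_conj]
    push_cast
    linear_combination (-(2 : ℂ)⁻¹) * hab'
  simp only [hopfMonomial, hopfC, map_mul, map_pow, map_add, map_sub, map_one, eval_X, eval_C,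
    Matrix.cons_val_zero, Matrix.cons_val_one, Matrix.cons_val_two, Matrix.head_cons,
    Matrix.tail_cons, ha, hb, star_def, conj_conj, map_ofNat, hη, hη']
  exact (conjMonomial_eq_of_balanced hd a b).symm

def hopfReduction (q : MvPolynomial (Fin 4) ℂ) : MvPolynomial (Fin 3) ℂ :=
  ∑ d ∈ q.support with d 0 + d 2 = d 1 + d 3, C (coeff d q) * hopfMonomial d

lemma totalDegree_hopfReduction_le {q : MvPolynomial (Fin 4) ℂ} {t : ℕ}
    (hq : q.totalDegree ≤ 2 * t + 1) : (hopfReduction q).totalDegree ≤ t := by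
  refine totalDegree_finsetSum_le fun d hd => ?_
  rw [Finset.mem_filter] at hd
  have hdeg : d 0 + d 1 + d 2 + d 3 ≤ 2 * t + 1 := by
    have := (le_totalDegree hd.1).trans hq
    rwa [Finsupp.sum_fintype _ _ fun _ => rfl, Fin.sum_univ_four] at this
  refine (totalDegree_mul _ _).trans ?_
  rw [totalDegree_C, zero_add]
  exact (totalDegree_hopfMonomial_le hd.2).trans (by omega)

lemma eval_hopfReduction {a b : ℂ} (hab : normSq a + normSq b = 1) (q : MvPolynomial (Fin 4) ℂ) :
    eval ![((hopfC (a, b)).1 : ℂ), (hopfC (a, b)).2, conj (hopfC (a, b)).2] (hopfReduction q) =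
      ∑ d ∈ q.support with d 0 + d 2 = d 1 + d 3, coeff d q * conjMonomial d a b := by
  rw [hopfReduction, map_sum]
  refine Finset.sum_congr rfl fun d hd => ?_
  rw [map_mul, eval_C, eval_hopfMonomial hab (Finset.mem_filter.mp hd).2]

theorem stmt9 (t : ℕ) (f : MvPolynomial (Fin 4) ℂ) (hf : f.totalDegree ≤ 2 * t + 1) :
    ∃ g : MvPolynomial (Fin 3) ℂ, g.totalDegree ≤ t ∧
      ∀ a b : ℂ, Complex.normSq a + Complex.normSq b = 1 →
        (μH[1] circ).toReal⁻¹ • ∫ z in circ, evalC4 (a * z, b * z) f ∂μH[1] =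
          evalC3 (hopfC (a, b)) g := by
  set q := aeval reImViaConj f
  have hq : q.totalDegree ≤ 2 * t + 1 :=
    (totalDegree_aeval_le (fun i => (isHomogeneous_reImViaConj i).totalDegree_le) f).trans hf
  refine ⟨aeval conjViaReIm (hopfReduction q), ?_, fun a b hab => ?_⟩
  · exact (totalDegree_aeval_le (fun i => (isHomogeneous_conjViaReIm i).totalDegree_le) _).trans
      (totalDegree_hopfReduction_le hq)
  · rw [evalC3_aeval_conjViaReIm, eval_hopfReduction hab, ← circMean_eval_conj_mul]
    change circMean (fun z => evalC4 (a * z, b * z) f) = _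
    simp only [evalC4_eq_eval_aeval_reImViaConj, q]
end
end

section
/- Let t ∈ ℕ and let f be a polynomial in 4 real variables with complex coefficients of total degree ≤ 2t+1 whose restriction to S³ is constant on Hopf fibers, i.e. f(az, bz) = f(a,b) for all (a,b) ∈ S³ and all z ∈ S¹. Then there exists a polynomial g in 3 real variables with complex coefficients of total degree ≤ t such that f(a,b) = g(π(a,b)) for all (a,b) ∈ S³. -/
open MeasureTheory Metric MvPolynomial

noncomputable section

def sVars : Fin 4 → MvPolynomial (Fin 4) ℂ :=
  ![MvPolynomial.C (1/2) * (X 0 + X 1), MvPolynomial.C (-(Complex.I)/2) * (X 0 - X 1),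
    MvPolynomial.C (1/2) * (X 2 + X 3), MvPolynomial.C (-(Complex.I)/2) * (X 2 - X 3)]

lemma eval_bind₁' {σ τ : Type*} (v : τ → ℂ) (s : σ → MvPolynomial τ ℂ) (φ : MvPolynomial σ ℂ) :
    eval v (bind₁ s φ) = eval (fun i => eval v (s i)) φ := by
  rw [show (eval v : MvPolynomial τ ℂ →+* ℂ) = eval₂Hom (RingHom.id ℂ) v from rfl,
    eval₂Hom_bind₁]
  rfl

lemma evalC4_eq (f : MvPolynomial (Fin 4) ℂ) (c d : ℂ) :
    MvPolynomial.eval (fun i => (![c.re, c.im, d.re, d.im] i : ℂ)) f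
      = eval ![c, (starRingEnd ℂ) c, d, (starRingEnd ℂ) d] (bind₁ sVars f) := by
  rw [eval_bind₁']
  have hg : (fun i => (![c.re, c.im, d.re, d.im] i : ℂ))
      = fun i => eval ![c, (starRingEnd ℂ) c, d, (starRingEnd ℂ) d] (sVars i) := by
    funext i
    fin_cases i
    · show ((c.re : ℂ)) = eval ![c, (starRingEnd ℂ) c, d, (starRingEnd ℂ) d] (sVars 0)
      simp only [sVars, Matrix.cons_val_zero, Matrix.cons_val_one, Matrix.head_cons, map_mul,
        map_add, map_sub, eval_C, eval_X]
      rw [Complex.add_conj]; push_cast; ring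
    · show ((c.im : ℂ)) = eval ![c, (starRingEnd ℂ) c, d, (starRingEnd ℂ) d] (sVars 1)
      simp only [sVars, Matrix.cons_val_zero, Matrix.cons_val_one, Matrix.head_cons, map_mul,
        map_add, map_sub, eval_C, eval_X]
      rw [Complex.sub_conj]; push_cast; linear_combination (c.im : ℂ) * Complex.I_sq
    · show ((d.re : ℂ)) = eval ![c, (starRingEnd ℂ) c, d, (starRingEnd ℂ) d] (sVars 2)
      simp only [sVars, Matrix.cons_val_zero, Matrix.cons_val_one, Matrix.head_cons,
        Matrix.cons_val_two, Matrix.tail_cons, Matrix.cons_val_three, map_mul,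
        map_add, map_sub, eval_C, eval_X]
      rw [Complex.add_conj]; push_cast; ring
    · show ((d.im : ℂ)) = eval ![c, (starRingEnd ℂ) c, d, (starRingEnd ℂ) d] (sVars 3)
      simp only [sVars, Matrix.cons_val_zero, Matrix.cons_val_one, Matrix.head_cons,
        Matrix.cons_val_two, Matrix.tail_cons, Matrix.cons_val_three, map_mul,
        map_add, map_sub, eval_C, eval_X]
      rw [Complex.sub_conj]; push_cast; linear_combination (d.im : ℂ) * Complex.I_sq
  rw [hg]

lemma deg_add_aux (c : ℂ) (i j : Fin 4) :
    (MvPolynomial.C c * (X i + X j) : MvPolynomial (Fin 4) ℂ).totalDegree ≤ 1 := by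
  refine (totalDegree_mul _ _).trans ?_
  rw [totalDegree_C, zero_add]
  exact (totalDegree_add _ _).trans (by simp [totalDegree_X])

lemma deg_sub_aux (c : ℂ) (i j : Fin 4) :
    (MvPolynomial.C c * (X i - X j) : MvPolynomial (Fin 4) ℂ).totalDegree ≤ 1 := by
  refine (totalDegree_mul _ _).trans ?_
  rw [totalDegree_C, zero_add]
  refine le_trans ?_ (le_refl 1)
  exact (totalDegree_sub _ _).trans (by simp [totalDegree_X])

lemma sVars_deg (i : Fin 4) : (sVars i).totalDegree ≤ 1 := by
  fin_cases i
  · exact deg_add_aux _ _ _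
  · exact deg_sub_aux _ _ _
  · exact deg_add_aux _ _ _
  · exact deg_sub_aux _ _ _

lemma totalDegree_bind₁_le (f : MvPolynomial (Fin 4) ℂ) :
    (bind₁ sVars f).totalDegree ≤ f.totalDegree := by
  conv_lhs => rw [f.as_sum]
  rw [map_sum]
  refine le_trans (totalDegree_finset_sum _ _) (Finset.sup_le fun d hd => ?_)
  rw [bind₁_monomial]
  refine le_trans (totalDegree_mul _ _) ?_
  rw [totalDegree_C, zero_add]
  calc (∏ i ∈ d.support, sVars i ^ d i).totalDegree
      ≤ ∑ i ∈ d.support, (sVars i ^ d i).totalDegree := totalDegree_finset_prod _ _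
    _ ≤ ∑ i ∈ d.support, d i := Finset.sum_le_sum fun i _ =>
        (totalDegree_pow _ _).trans
          (le_trans (Nat.mul_le_mul_left _ (sVars_deg i)) (by omega))
    _ = d.sum fun _ e => e := rfl
    _ ≤ f.totalDegree := le_totalDegree hd

/-- Hopf-coordinate polynomial associated to a balanced monomial exponent. -/
def GG (d : Fin 4 →₀ ℕ) : MvPolynomial (Fin 3) ℂ :=
  if d 1 ≤ d 0 then
    (MvPolynomial.C (2⁻¹ : ℂ) * (1 + X 0)) ^ (d 1) * (MvPolynomial.C (2⁻¹ : ℂ) * (1 - X 0)) ^ (d 2)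
      * (MvPolynomial.C (2⁻¹ : ℂ) * (X 1 + MvPolynomial.C Complex.I * X 2)) ^ (d 0 - d 1)
  else
    (MvPolynomial.C (2⁻¹ : ℂ) * (1 + X 0)) ^ (d 0) * (MvPolynomial.C (2⁻¹ : ℂ) * (1 - X 0)) ^ (d 3)
      * (MvPolynomial.C (2⁻¹ : ℂ) * (X 1 - MvPolynomial.C Complex.I * X 2)) ^ (d 1 - d 0)

lemma deg3_aux1 : (MvPolynomial.C (2⁻¹ : ℂ) * (1 + X 0) : MvPolynomial (Fin 3) ℂ).totalDegree ≤ 1 := by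
  refine (totalDegree_mul _ _).trans ?_
  rw [totalDegree_C, zero_add]
  exact (totalDegree_add _ _).trans (by simp [totalDegree_X, totalDegree_one])

lemma deg3_aux2 : (MvPolynomial.C (2⁻¹ : ℂ) * (1 - X 0) : MvPolynomial (Fin 3) ℂ).totalDegree ≤ 1 := by
  refine (totalDegree_mul _ _).trans ?_
  rw [totalDegree_C, zero_add]
  exact (totalDegree_sub _ _).trans (by simp [totalDegree_X, totalDegree_one])

lemma deg3_aux3 : (MvPolynomial.C (2⁻¹ : ℂ) * (X 1 + MvPolynomial.C Complex.I * X 2) : MvPolynomial (Fin 3) ℂ).totalDegree ≤ 1 := by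
  refine (totalDegree_mul _ _).trans ?_
  rw [totalDegree_C, zero_add]
  refine (totalDegree_add _ _).trans ?_
  refine max_le (by simp [totalDegree_X]) ?_
  refine (totalDegree_mul _ _).trans ?_
  simp [totalDegree_X, totalDegree_C]

lemma deg3_aux4 : (MvPolynomial.C (2⁻¹ : ℂ) * (X 1 - MvPolynomial.C Complex.I * X 2) : MvPolynomial (Fin 3) ℂ).totalDegree ≤ 1 := by
  refine (totalDegree_mul _ _).trans ?_
  rw [totalDegree_C, zero_add]
  refine (totalDegree_sub _ _).trans ?_
  refine max_le (by simp [totalDegree_X]) ?_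
  refine (totalDegree_mul _ _).trans ?_
  simp [totalDegree_X, totalDegree_C]

lemma GG_degree (d : Fin 4 →₀ ℕ) (hbal : d 0 + d 2 = d 1 + d 3) :
    (GG d).totalDegree ≤ d 0 + d 2 := by
  unfold GG
  split_ifs with h
  · refine le_trans (totalDegree_mul _ _) (le_trans (Nat.add_le_add
      (le_trans (totalDegree_mul _ _) (Nat.add_le_add
        ((totalDegree_pow _ _).trans (Nat.mul_le_mul_left _ deg3_aux1))
        ((totalDegree_pow _ _).trans (Nat.mul_le_mul_left _ deg3_aux2))))
      ((totalDegree_pow _ _).trans (Nat.mul_le_mul_left _ deg3_aux3))) ?_)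
    omega
  · refine le_trans (totalDegree_mul _ _) (le_trans (Nat.add_le_add
      (le_trans (totalDegree_mul _ _) (Nat.add_le_add
        ((totalDegree_pow _ _).trans (Nat.mul_le_mul_left _ deg3_aux1))
        ((totalDegree_pow _ _).trans (Nat.mul_le_mul_left _ deg3_aux2))))
      ((totalDegree_pow _ _).trans (Nat.mul_le_mul_left _ deg3_aux4))) ?_)
    omega

lemma conj_eq_re_sub_im (z : ℂ) : (z.re : ℂ) - z.im * Complex.I = (starRingEnd ℂ) z := by
  simp [Complex.ext_iff]

lemma GG_eval (a b : ℂ) (h : Complex.normSq a + Complex.normSq b = 1) (d : Fin 4 →₀ ℕ)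
    (hbal : d 0 + d 2 = d 1 + d 3) :
    eval (fun i => (![((Complex.normSq a - Complex.normSq b : ℝ)),
        (2 * a * (starRingEnd ℂ) b).re, (2 * a * (starRingEnd ℂ) b).im] i : ℂ)) (GG d)
      = a ^ d 0 * (starRingEnd ℂ) a ^ d 1 * b ^ d 2 * (starRingEnd ℂ) b ^ d 3 := by
  set v3 : Fin 3 → ℂ := fun i => (![((Complex.normSq a - Complex.normSq b : ℝ)),
      (2 * a * (starRingEnd ℂ) b).re, (2 * a * (starRingEnd ℂ) b).im] i : ℂ) with hv3
  have h' : (Complex.normSq a : ℂ) + (Complex.normSq b : ℂ) = 1 := by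
    rw [← Complex.ofReal_add, h, Complex.ofReal_one]
  have e0 : v3 0 = ((Complex.normSq a : ℂ) - Complex.normSq b) := by
    simp [hv3]
  have e1 : v3 1 = (((2 * a * (starRingEnd ℂ) b).re : ℝ) : ℂ) := by simp [hv3]
  have e2 : v3 2 = (((2 * a * (starRingEnd ℂ) b).im : ℝ) : ℂ) := by simp [hv3]
  have hu : eval v3 (MvPolynomial.C (2⁻¹ : ℂ) * (1 + X 0)) = a * (starRingEnd ℂ) a := by
    rw [map_mul, map_add, eval_C, map_one, eval_X, e0, Complex.mul_conj]
    linear_combination (-2⁻¹ : ℂ) * h'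
  have hv : eval v3 (MvPolynomial.C (2⁻¹ : ℂ) * (1 - X 0)) = b * (starRingEnd ℂ) b := by
    rw [map_mul, map_sub, eval_C, map_one, eval_X, e0, Complex.mul_conj]
    linear_combination (-2⁻¹ : ℂ) * h'
  have hw : eval v3 (MvPolynomial.C (2⁻¹ : ℂ) * (X 1 + MvPolynomial.C Complex.I * X 2))
      = a * (starRingEnd ℂ) b := by
    rw [map_mul, map_add, map_mul, eval_C, eval_C, eval_X, eval_X, e1, e2, mul_comm Complex.I,
      Complex.re_add_im]
    ring
  have hwb : eval v3 (MvPolynomial.C (2⁻¹ : ℂ) * (X 1 - MvPolynomial.C Complex.I * X 2))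
      = (starRingEnd ℂ) a * b := by
    rw [map_mul, map_sub, map_mul, eval_C, eval_C, eval_X, eval_X, e1, e2, mul_comm Complex.I,
      conj_eq_re_sub_im, map_mul, map_mul]
    simp only [Complex.conj_conj, map_ofNat]
    ring
  unfold GG
  split_ifs with hij
  · have h0 : d 0 = d 1 + (d 0 - d 1) := by omega
    have h3 : d 3 = d 2 + (d 0 - d 1) := by omega
    rw [map_mul, map_mul, map_pow, map_pow, map_pow, hu, hv, hw]
    conv_rhs => rw [h0, h3]
    ring
  · have h1 : d 1 = d 0 + (d 1 - d 0) := by omega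
    have h2 : d 2 = d 3 + (d 1 - d 0) := by omega
    rw [map_mul, map_mul, map_pow, map_pow, map_pow, hu, hv, hwb]
    conv_rhs => rw [h1, h2]
    ring

lemma circle_sum {N : ℕ} {ζ : ℂ} (hζ : IsPrimitiveRoot ζ N) (habs : ‖ζ‖ = 1)
    (p q : ℕ) (hp : p < N) (hq : q < N) :
    ∑ k ∈ Finset.range N, ((ζ ^ k) ^ p * ((starRingEnd ℂ) (ζ ^ k)) ^ q)
      = if p = q then (N : ℂ) else 0 := by
  have hz : ζ ≠ 0 := by
    intro h0; rw [h0] at habs; simp at habs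
  have hconj : (starRingEnd ℂ) ζ = ζ⁻¹ :=
    (Complex.inv_eq_conj habs).symm
  have hterm : ∀ k, (ζ ^ k) ^ p * ((starRingEnd ℂ) (ζ ^ k)) ^ q
      = (ζ ^ p * (ζ ^ q)⁻¹) ^ k := by
    intro k
    rw [map_pow, hconj, mul_pow, ← pow_mul, ← pow_mul, mul_comm k p, mul_comm k q,
      pow_mul, pow_mul, inv_pow]
  rw [Finset.sum_congr rfl fun k _ => hterm k]
  by_cases hpq : p = q
  · subst hpq
    rw [mul_inv_cancel₀ (pow_ne_zero _ hz)]
    simp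
  · have hr : ζ ^ p * (ζ ^ q)⁻¹ ≠ 1 := by
      intro h1
      apply hpq
      refine hζ.pow_inj hp hq ?_
      field_simp at h1
      exact h1
    rw [geom_sum_eq hr]
    have hN : (ζ ^ p * (ζ ^ q)⁻¹) ^ N = 1 := by
      rw [mul_pow, ← pow_mul, mul_comm p N, pow_mul, hζ.pow_eq_one, one_pow,
        inv_pow, ← pow_mul, mul_comm q N, pow_mul, hζ.pow_eq_one, one_pow, inv_one, mul_one]
    rw [hN]
    simp [hpq]

theorem stmt11 (t : ℕ) (f : MvPolynomial (Fin 4) ℂ) (hf : f.totalDegree ≤ 2 * t + 1)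
    (hconst : ∀ a b : ℂ, Complex.normSq a + Complex.normSq b = 1 →
      ∀ z : ℂ, ‖z‖ = 1 → evalC4 (a * z, b * z) f = evalC4 (a, b) f) :
    ∃ g : MvPolynomial (Fin 3) ℂ, g.totalDegree ≤ t ∧
      ∀ a b : ℂ, Complex.normSq a + Complex.normSq b = 1 →
        evalC4 (a, b) f = evalC3 (hopfC (a, b)) g := by
  classical
  set Q := bind₁ sVars f with hQdef
  have hdegQ : Q.totalDegree ≤ 2 * t + 1 := (totalDegree_bind₁_le f).trans hf
  set ζ : ℂ := Complex.exp (2 * Real.pi * Complex.I / ((2 * t + 2 : ℕ) : ℂ)) with hζdef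
  have hζ : IsPrimitiveRoot ζ (2 * t + 2) := Complex.isPrimitiveRoot_exp _ (by omega)
  have habs : ‖ζ‖ = 1 := by
    have harg : (2 * Real.pi * Complex.I / ((2 * t + 2 : ℕ) : ℂ))
        = ((2 * Real.pi / (2 * t + 2 : ℕ) : ℝ) : ℂ) * Complex.I := by
      push_cast; ring
    rw [hζdef, harg, Complex.norm_exp_ofReal_mul_I]
  have hsupsum : ∀ d ∈ Q.support, d 0 + d 1 + d 2 + d 3 ≤ 2 * t + 1 := by
    intro d hd
    have h2 := (le_totalDegree hd).trans hdegQ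
    have h3 : (d.sum fun _ e => e) = d 0 + d 1 + d 2 + d 3 := by
      rw [Finsupp.sum_fintype _ _ fun _ => rfl, Fin.sum_univ_four]
    omega
  refine ⟨∑ d ∈ Q.support.filter (fun d => d 0 + d 2 = d 1 + d 3),
      MvPolynomial.C (coeff d Q) * GG d, ?_, ?_⟩
  · refine (totalDegree_finset_sum _ _).trans (Finset.sup_le fun d hd => ?_)
    rw [Finset.mem_filter] at hd
    refine (totalDegree_mul _ _).trans ?_
    rw [totalDegree_C, zero_add]
    have h1 := GG_degree d hd.2
    have h2 := hsupsum d hd.1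
    have h3 := hd.2
    omega
  · intro a b hab
    have hA : ∀ c e : ℂ, evalC4 (c, e) f
        = eval ![c, (starRingEnd ℂ) c, e, (starRingEnd ℂ) e] Q := fun c e => evalC4_eq f c e
    have key : ((2 * t + 2 : ℕ) : ℂ) * evalC4 (a, b) f
        = ((2 * t + 2 : ℕ) : ℂ) * ∑ d ∈ Q.support.filter (fun d => d 0 + d 2 = d 1 + d 3),
            coeff d Q * (a ^ d 0 * (starRingEnd ℂ) a ^ d 1 * b ^ d 2
              * (starRingEnd ℂ) b ^ d 3) := by
      have lhs_eq : ∑ k ∈ Finset.range (2 * t + 2), evalC4 (a * ζ ^ k, b * ζ ^ k) f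
          = ((2 * t + 2 : ℕ) : ℂ) * evalC4 (a, b) f := by
        rw [Finset.sum_congr rfl fun k _ =>
          hconst a b hab (ζ ^ k) (by rw [norm_pow, habs, one_pow])]
        rw [Finset.sum_const, Finset.card_range, nsmul_eq_mul]
      rw [← lhs_eq]
      calc ∑ k ∈ Finset.range (2 * t + 2), evalC4 (a * ζ ^ k, b * ζ ^ k) f
          = ∑ k ∈ Finset.range (2 * t + 2), ∑ d ∈ Q.support,
              coeff d Q * (a ^ d 0 * (starRingEnd ℂ) a ^ d 1 * b ^ d 2
                * (starRingEnd ℂ) b ^ d 3)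
                * ((ζ ^ k) ^ (d 0 + d 2) * ((starRingEnd ℂ) (ζ ^ k)) ^ (d 1 + d 3)) := by
            refine Finset.sum_congr rfl fun k _ => ?_
            rw [hA, map_mul, map_mul, eval_eq']
            refine Finset.sum_congr rfl fun d _ => ?_
            rw [Fin.prod_univ_four]
            simp only [Matrix.cons_val_zero, Matrix.cons_val_one, Matrix.head_cons,
              Matrix.cons_val_two, Matrix.tail_cons, Matrix.cons_val_three]
            rw [mul_pow, mul_pow, mul_pow, mul_pow, pow_add, pow_add]
            ring
        _ = ∑ d ∈ Q.support,
              coeff d Q * (a ^ d 0 * (starRingEnd ℂ) a ^ d 1 * b ^ d 2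
                * (starRingEnd ℂ) b ^ d 3)
                * ∑ k ∈ Finset.range (2 * t + 2),
                  ((ζ ^ k) ^ (d 0 + d 2) * ((starRingEnd ℂ) (ζ ^ k)) ^ (d 1 + d 3)) := by
            rw [Finset.sum_comm]
            exact Finset.sum_congr rfl fun d _ => (Finset.mul_sum _ _ _).symm
        _ = ∑ d ∈ Q.support,
              coeff d Q * (a ^ d 0 * (starRingEnd ℂ) a ^ d 1 * b ^ d 2
                * (starRingEnd ℂ) b ^ d 3)
                * (if d 0 + d 2 = d 1 + d 3 then ((2 * t + 2 : ℕ) : ℂ) else 0) := by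
            refine Finset.sum_congr rfl fun d hd => ?_
            have hb := hsupsum d hd
            rw [circle_sum hζ habs _ _ (by omega) (by omega)]
        _ = ((2 * t + 2 : ℕ) : ℂ) * ∑ d ∈ Q.support.filter
              (fun d => d 0 + d 2 = d 1 + d 3),
              coeff d Q * (a ^ d 0 * (starRingEnd ℂ) a ^ d 1 * b ^ d 2
                * (starRingEnd ℂ) b ^ d 3) := by
            rw [Finset.mul_sum, Finset.sum_filter]
            refine Finset.sum_congr rfl fun d _ => ?_
            split_ifs
            · ring
            · simp
    have hNne : ((2 * t + 2 : ℕ) : ℂ) ≠ 0 := Nat.cast_ne_zero.mpr (by omega)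
    have hmain := mul_left_cancel₀ hNne key
    rw [hmain]
    symm
    show eval _ _ = _
    rw [map_sum]
    refine Finset.sum_congr rfl fun d hd => ?_
    rw [Finset.mem_filter] at hd
    rw [map_mul, eval_C]
    congr 1
    have := GG_eval a b hab d hd.2
    rw [← this]
    rfl
end
end
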